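/- Let P be a non-trivial Q0-like k×k pattern that contains an occurrence of the 2×2 pattern ((0,1),(1,0)) of height k−1. Then W(P) avoids P. -/

import Mathlib

/-- A 0-1 matrix `M` contains a pattern `P` if there are strictly increasing row and
column index maps embedding the 1-entries of `P` into 1-entries of `M`. -/
def Contains {m n k l : ℕ} (M : Fin m → Fin n → Bool) (P : Fin k → Fin l → Bool) : Prop :=
  ∃ r : Fin k → Fin m, ∃ c : Fin l → Fin n, StrictMono r ∧ StrictMono c ∧
    ∀ i j, P i j = true → M (r i) (c j) = true

def Avoids {m n k l : ℕ} (M : Fin m → Fin n → Bool) (P : Fin k → Fin l → Bool) : Prop :=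
  ¬ Contains M P

/-- The matrix obtained from `M` by changing the entry at `(i, j)` to 1. -/
def SetOne {m n : ℕ} (M : Fin m → Fin n → Bool) (i : Fin m) (j : Fin n) :
    Fin m → Fin n → Bool :=
  fun i' j' => if i' = i ∧ j' = j then true else M i' j'

def ExpandableRow {m n k l : ℕ} (M : Fin m → Fin n → Bool) (P : Fin k → Fin l → Bool)
    (i : Fin m) : Prop :=
  (∀ j, M i j = false) ∧ ∀ j, Contains (SetOne M i j) P

def ExpandableCol {m n k l : ℕ} (M : Fin m → Fin n → Bool) (P : Fin k → Fin l → Bool)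
    (j : Fin n) : Prop :=
  (∀ i, M i j = false) ∧ ∀ i, Contains (SetOne M i j) P

def Saturated {m n k l : ℕ} (M : Fin m → Fin n → Bool) (P : Fin k → Fin l → Bool) : Prop :=
  Avoids M P ∧ ∀ i j, M i j = false → Contains (SetOne M i j) P

def IsWitness {m n k l : ℕ} (M : Fin m → Fin n → Bool) (P : Fin k → Fin l → Bool) : Prop :=
  Avoids M P ∧ (∃ i, ExpandableRow M P i) ∧ (∃ j, ExpandableCol M P j)

def HorizontalWitness {m n k l : ℕ} (M : Fin m → Fin n → Bool)
    (P : Fin k → Fin l → Bool) : Prop :=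
  Avoids M P ∧ ∃ j, ExpandableCol M P j

def VerticalWitness {m n k l : ℕ} (M : Fin m → Fin n → Bool)
    (P : Fin k → Fin l → Bool) : Prop :=
  Avoids M P ∧ ∃ i, ExpandableRow M P i

/-- `P` is once-separable: block form `((A,0),(0,B))` or `((0,A),(B,0))` with `A`, `B` nonzero. -/
def OnceSeparable {k l : ℕ} (P : Fin k → Fin l → Bool) : Prop :=
  ∃ a b : ℕ, a ≤ k ∧ b ≤ l ∧
    (((∀ i j, P i j = true → ((i.val < a ∧ j.val < b) ∨ (a ≤ i.val ∧ b ≤ j.val))) ∧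
      (∃ i j, i.val < a ∧ j.val < b ∧ P i j = true) ∧
      (∃ i j, a ≤ i.val ∧ b ≤ j.val ∧ P i j = true)) ∨
     ((∀ i j, P i j = true → ((i.val < a ∧ b ≤ j.val) ∨ (a ≤ i.val ∧ j.val < b))) ∧
      (∃ i j, i.val < a ∧ b ≤ j.val ∧ P i j = true) ∧
      (∃ i j, a ≤ i.val ∧ j.val < b ∧ P i j = true)))

def NoEmptyRowCol {k l : ℕ} (P : Fin k → Fin l → Bool) : Prop :=
  (∀ i, ∃ j, P i j = true) ∧ (∀ j, ∃ i, P i j = true)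

def IsPermMatrix {k : ℕ} (P : Fin k → Fin k → Bool) : Prop :=
  (∀ i, ∃! j, P i j = true) ∧ (∀ j, ∃! i, P i j = true)

/-- `P` is non-trivial: it has a row whose only 1-entry is leftmost, a row whose only
1-entry is rightmost, a column whose only 1-entry is topmost, and a column whose only
1-entry is bottommost. -/
def NonTrivial {k l : ℕ} (P : Fin k → Fin l → Bool) : Prop :=
  (∃ i, ∀ j, (P i j = true ↔ j.val = 0)) ∧
  (∃ i, ∀ j, (P i j = true ↔ j.val = l - 1)) ∧
  (∃ j, ∀ i, (P i j = true ↔ i.val = 0)) ∧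
  (∃ j, ∀ i, (P i j = true ↔ i.val = k - 1))

/-- The two-copy witness construction `W(P)` (0-based indices; `s < t` are the 0-based
rows of the leftmost and rightmost 1-entries of `P`). -/
def WP {k : ℕ} (P : Fin k → Fin k → Bool) (s t : ℕ) :
    Fin (k + (t - s)) → Fin (2 * k - 2) → Bool :=
  fun i j =>
    if h : j.val < k - 1 ∧ i.val < k then P ⟨i.val, h.2⟩ ⟨j.val, by omega⟩
    else if h2 : k - 1 ≤ j.val ∧ t - s ≤ i.val ∧ i.val - (t - s) < k ∧ j.val - (k - 2) < k then
      P ⟨i.val - (t - s), h2.2.2.1⟩ ⟨j.val - (k - 2), h2.2.2.2⟩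
    else false

/-! Write `d = t - s`. An occurrence of `P` in `W(P)` moves rows down by between `0` and `d` and
columns right by between `0` and `k - 2`. Row `t` of `W(P)` is empty: its left part is row `t` of
`P` without the last column, its right part is row `s` of `P` without the first column. So no
nonempty row of `P` is sent to row `t`; in particular row `s` goes above it and row `t` below it.

Suppose the occurrence of height `k - 1` is `(0, a), (k - 2, j)` with `j < a`. Row `0` goes above
row `d`, so `(0, a)` lands in the left copy, hence so does `(k - 2, j)`, necessarily in row `k - 1`,
i.e. on `(k - 1, b)`. The image of `(0, a)` then lies right of column `b > a`, so not in row `0`: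
it is in row `1`, and every row `i ≤ k - 2` is sent to `i + 1`. That image is a 1-entry `(1, j')`
of `P` with `j' > b`, and mapping it once more lands in the right copy in row `2`, so `d ≤ 2`;
row `s` goes to `s + 1 < t`, so `d = 2`. Now `(s, 0)` lands on a 1-entry of `P` in row `t - 1`,
whose image lies in the empty row `t`.

An occurrence of height `k - 1` in rows `1` and `k - 1` is one in rows `0` and `k - 2` of the
180° rotation of `P`, and `W` commutes with that rotation. -/

theorem Fin.val_add_sub_le_of_strictMono {n m : ℕ} {f : Fin n → Fin m} (hf : StrictMono f)
    {x y : Fin n} (hxy : x ≤ y) : (f x : ℕ) + (y - x) ≤ f y := by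
  obtain ⟨y, hy⟩ := y
  change x.val ≤ y at hxy
  induction y, hxy using Nat.le_induction with
  | base => simp
  | succ y hxy ih =>
    have hlt : f ⟨y, by omega⟩ < f ⟨y + 1, hy⟩ := hf (Fin.mk_lt_mk.2 (Nat.lt_succ_self y))
    have := ih (by omega)
    rw [Fin.lt_def] at hlt
    simp only at this ⊢
    omega

theorem Fin.le_val_of_strictMono {n m : ℕ} {f : Fin n → Fin m} (hf : StrictMono f) (x : Fin n) :
    (x : ℕ) ≤ f x := by
  have := Fin.val_add_sub_le_of_strictMono hf (show ⟨0, x.pos⟩ ≤ x from Nat.zero_le _)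
  simp only at this
  omega

theorem Fin.val_add_le_of_strictMono {n m : ℕ} {f : Fin n → Fin m} (hf : StrictMono f)
    (x : Fin n) : (f x : ℕ) + (n - x) ≤ m := by
  have hx := x.isLt
  have := Fin.val_add_sub_le_of_strictMono hf
    (show x ≤ ⟨n - 1, by omega⟩ from Nat.le_sub_one_of_lt hx)
  have := (f ⟨n - 1, by omega⟩).isLt
  simp only at *
  omega

def rot180 {m n : ℕ} (M : Fin m → Fin n → Bool) : Fin m → Fin n → Bool :=
  fun i j => M i.rev j.rev

theorem Contains.trans {m n m' n' k l : ℕ} {N : Fin m' → Fin n' → Bool}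
    {M : Fin m → Fin n → Bool} {P : Fin k → Fin l → Bool} (hNM : Contains N M)
    (hMP : Contains M P) : Contains N P := by
  obtain ⟨r, c, hr, hc, h⟩ := hNM
  obtain ⟨r', c', hr', hc', h'⟩ := hMP
  exact ⟨r ∘ r', c ∘ c', hr.comp hr', hc.comp hc', fun i j hij => h _ _ (h' i j hij)⟩

theorem Contains.rot180 {m n k l : ℕ} {M : Fin m → Fin n → Bool}
    {P : Fin k → Fin l → Bool} (h : Contains M P) : Contains (rot180 M) (rot180 P) := by
  obtain ⟨r, c, hr, hc, h⟩ := h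
  refine ⟨fun i => (r i.rev).rev, fun j => (c j.rev).rev, fun i i' hi => ?_, fun j j' hj => ?_,
    fun i j hij => by simpa [_root_.rot180] using h _ _ hij⟩
  · exact Fin.rev_lt_rev.2 (hr (Fin.rev_lt_rev.2 hi))
  · exact Fin.rev_lt_rev.2 (hc (Fin.rev_lt_rev.2 hj))

theorem WP_eq_true_left {k s t : ℕ} {P : Fin k → Fin k → Bool} {x : Fin (k + (t - s))}
    {y : Fin (2 * k - 2)} (h : WP P s t x y = true) (hy : (y : ℕ) < k - 1) :
    ∃ i j : Fin k, (i : ℕ) = x ∧ (j : ℕ) = y ∧ P i j = true := by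
  unfold WP at h
  split_ifs at h
  · exact ⟨_, _, rfl, rfl, h⟩
  · omega

theorem WP_eq_true_right {k s t : ℕ} {P : Fin k → Fin k → Bool} {x : Fin (k + (t - s))}
    {y : Fin (2 * k - 2)} (h : WP P s t x y = true) (hy : k - 1 ≤ (y : ℕ)) :
    ∃ i j : Fin k, (i : ℕ) + (t - s) = x ∧ (j : ℕ) + (k - 2) = y ∧ P i j = true := by
  unfold WP at h
  split_ifs at h
  · omega
  · exact ⟨_, _, by simp only; omega, by simp only; omega, h⟩

theorem WP_rot180_cast {k s t : ℕ} (P : Fin k → Fin k → Bool) (hst : s ≤ t) (htk : t < k)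
    (i : Fin (k + (t - s))) (j : Fin (2 * k - 2)) :
    WP (rot180 P) (k - 1 - t) (k - 1 - s) (Fin.cast (by omega) i) j = rot180 (WP P s t) i j := by
  simp only [WP, rot180, Fin.val_rev, Fin.val_cast]
  split_ifs <;> first | omega | (congr 1 <;> ext <;> simp only [Fin.val_rev] <;> omega)

theorem contains_rot180_WP {k s t : ℕ} (P : Fin k → Fin k → Bool) (hst : s ≤ t)
    (htk : t < k) :
    Contains (WP (rot180 P) (k - 1 - t) (k - 1 - s)) (rot180 (WP P s t)) :=
  ⟨Fin.cast (by omega), id, Fin.cast_strictMono _, strictMono_id,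
    fun i j h => (WP_rot180_cast P hst htk i j).trans h⟩

structure Occurrence {m n k l : ℕ} (M : Fin m → Fin n → Bool)
    (P : Fin k → Fin l → Bool) where
  row : Fin k → Fin m
  col : Fin l → Fin n
  row_strictMono : StrictMono row
  col_strictMono : StrictMono col
  apply_eq_true : ∀ i j, P i j = true → M (row i) (col j) = true

structure OuterRows {k : ℕ} (P : Fin k → Fin k → Bool) (a b s t : ℕ) : Prop where
  first_row : ∀ i j : Fin k, (i : ℕ) = 0 → (P i j = true ↔ (j : ℕ) = a)
  last_row : ∀ i j : Fin k, (i : ℕ) = k - 1 → (P i j = true ↔ (j : ℕ) = b)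
  left_row : ∀ i j : Fin k, (i : ℕ) = s → (P i j = true ↔ (j : ℕ) = 0)
  right_row : ∀ i j : Fin k, (i : ℕ) = t → (P i j = true ↔ (j : ℕ) = k - 1)

namespace OuterRows

variable {k a b s t : ℕ} {P : Fin k → Fin k → Bool}

theorem of_nonTrivial (hk : 0 < k) (hnt : NonTrivial P)
    (hrow0 : ∀ j : Fin k, (P ⟨0, hk⟩ j = true ↔ j.val = a))
    (hrowlast : ∀ j : Fin k, (P ⟨k - 1, by omega⟩ j = true ↔ j.val = b))
    (hcol0 : ∀ i : Fin k, (P i ⟨0, hk⟩ = true ↔ i.val = s))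
    (hcollast : ∀ i : Fin k, (P i ⟨k - 1, by omega⟩ = true ↔ i.val = t)) :
    OuterRows P a b s t where
  first_row i j hi := by rw [show i = ⟨0, hk⟩ from Fin.ext hi]; exact hrow0 j
  last_row i j hi := by rw [show i = ⟨k - 1, by omega⟩ from Fin.ext hi]; exact hrowlast j
  left_row i j hi := by
    obtain ⟨i₀, h₀⟩ := hnt.1
    rw [show i = i₀ from Fin.ext (hi.trans ((hcol0 i₀).1 ((h₀ _).2 rfl)).symm)]
    exact h₀ j
  right_row i j hi := by
    obtain ⟨i₀, h₀⟩ := hnt.2.1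
    rw [show i = i₀ from Fin.ext (hi.trans ((hcollast i₀).1 ((h₀ _).2 rfl)).symm)]
    exact h₀ j

theorem rot180 (hP : OuterRows P a b s t) (hak : a < k) (hbk : b < k) (hsk : s < k)
    (htk : t < k) :
    OuterRows (_root_.rot180 P) (k - 1 - b) (k - 1 - a) (k - 1 - t) (k - 1 - s) where
  first_row i j hi := (hP.last_row i.rev j.rev (by rw [Fin.val_rev]; omega)).trans
    (by rw [Fin.val_rev]; omega)
  last_row i j hi := (hP.first_row i.rev j.rev (by rw [Fin.val_rev]; omega)).trans
    (by rw [Fin.val_rev]; omega)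
  left_row i j hi := (hP.right_row i.rev j.rev (by rw [Fin.val_rev]; omega)).trans
    (by rw [Fin.val_rev]; omega)
  right_row i j hi := (hP.left_row i.rev j.rev (by rw [Fin.val_rev]; omega)).trans
    (by rw [Fin.val_rev]; omega)

theorem WP_eq_false_of_row_eq (hP : OuterRows P a b s t) (hst : s ≤ t)
    {x : Fin (k + (t - s))} (hx : (x : ℕ) = t) (y : Fin (2 * k - 2)) : WP P s t x y = false := by
  rw [← Bool.not_eq_true]
  intro h
  rcases lt_or_ge (y : ℕ) (k - 1) with hy | hy
  · obtain ⟨i, j, hi, hj, hij⟩ := WP_eq_true_left h hy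
    have := (hP.right_row i j (by omega)).1 hij
    omega
  · obtain ⟨i, j, hi, hj, hij⟩ := WP_eq_true_right h hy
    have := (hP.left_row i j (by omega)).1 hij
    omega

theorem row_ne (hP : OuterRows P a b s t) (hst : s ≤ t) (e : Occurrence (WP P s t) P)
    {i j : Fin k} (hij : P i j = true) : (e.row i : ℕ) ≠ t := fun h => by
  simpa [hP.WP_eq_false_of_row_eq hst h] using e.apply_eq_true i j hij

theorem lt_row_of_right (hP : OuterRows P a b s t) (hst : s ≤ t) (e : Occurrence (WP P s t) P)
    (i : Fin k) (hi : (i : ℕ) = t) : t < e.row i := by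
  obtain ⟨j, hj⟩ : ∃ j : Fin k, (j : ℕ) = k - 1 := ⟨⟨k - 1, by omega⟩, rfl⟩
  have := Fin.le_val_of_strictMono e.row_strictMono i
  have := hP.row_ne hst e ((hP.right_row i j hi).2 hj)
  omega

theorem row_lt_of_left (hP : OuterRows P a b s t) (hst : s ≤ t) (e : Occurrence (WP P s t) P)
    (i : Fin k) (hi : (i : ℕ) = s) : (e.row i : ℕ) < t := by
  obtain ⟨j, hj⟩ : ∃ j : Fin k, (j : ℕ) = 0 := ⟨⟨0, by omega⟩, rfl⟩
  have := Fin.val_add_le_of_strictMono e.row_strictMono i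
  have := hP.row_ne hst e ((hP.left_row i j hi).2 hj)
  omega

theorem col_lt_of_first (hP : OuterRows P a b s t) (hst : s ≤ t) (htk : t < k)
    (e : Occurrence (WP P s t) P) {i j : Fin k} (hi : (i : ℕ) = 0) (hij : P i j = true) :
    (e.col j : ℕ) < k - 1 := by
  obtain ⟨iS, hiS⟩ : ∃ i : Fin k, (i : ℕ) = s := ⟨⟨s, by omega⟩, rfl⟩
  have hgap := Fin.val_add_sub_le_of_strictMono e.row_strictMono
    (show i ≤ iS from Fin.le_def.2 (by omega))
  have hrS := hP.row_lt_of_left hst e iS hiS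
  by_contra! hj
  obtain ⟨i', -, hi', -⟩ := WP_eq_true_right (e.apply_eq_true i j hij) hj
  omega

theorem row_eq_and_col_eq_of_low_entry (hP : OuterRows P a b s t) (hst : s ≤ t)
    (htk : t < k - 1) (hak : a < k) (e : Occurrence (WP P s t) P) {iB jB : Fin k}
    (hB : P iB jB = true) (hiB : (iB : ℕ) = k - 2) (hjB : (jB : ℕ) < a) :
    (e.row iB : ℕ) = k - 1 ∧ (e.col jB : ℕ) = b := by
  obtain ⟨i₀, hi₀⟩ : ∃ i : Fin k, (i : ℕ) = 0 := ⟨⟨0, by omega⟩, rfl⟩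
  obtain ⟨ja, hja⟩ : ∃ j : Fin k, (j : ℕ) = a := ⟨⟨a, by omega⟩, rfl⟩
  obtain ⟨iT, hiT⟩ : ∃ i : Fin k, (i : ℕ) = t := ⟨⟨t, by omega⟩, rfl⟩
  have hcB : e.col jB < e.col ja := e.col_strictMono (Fin.lt_def.2 (by omega))
  have hca := hP.col_lt_of_first hst (by omega) e hi₀ ((hP.first_row i₀ ja hi₀).2 hja)
  have hrT := hP.lt_row_of_right hst e iT hiT
  have hgap := Fin.val_add_sub_le_of_strictMono e.row_strictMono
    (show iT ≤ iB from Fin.le_def.2 (by omega))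
  obtain ⟨i', j', hi', hj', hP'⟩ :=
    WP_eq_true_left (e.apply_eq_true iB jB hB) (by rw [Fin.lt_def] at hcB; omega)
  have hrB : (e.row iB : ℕ) = k - 1 := by omega
  exact ⟨hrB, hj' ▸ (hP.last_row i' j' (by omega)).1 hP'⟩

theorem row_eq_succ (hP : OuterRows P a b s t) (hst : s ≤ t) (htk : t < k - 1) (hab : a < b)
    (hbk : b < k) (e : Occurrence (WP P s t) P) {iB jB : Fin k} (hB : P iB jB = true)
    (hiB : (iB : ℕ) = k - 2) (hjB : (jB : ℕ) < a) (i : Fin k) (hi : (i : ℕ) ≤ k - 2) :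
    (e.row i : ℕ) = i + 1 := by
  obtain ⟨i₀, hi₀⟩ : ∃ i : Fin k, (i : ℕ) = 0 := ⟨⟨0, by omega⟩, rfl⟩
  obtain ⟨ja, hja⟩ : ∃ j : Fin k, (j : ℕ) = a := ⟨⟨a, by omega⟩, rfl⟩
  obtain ⟨hrB, hcB⟩ := hP.row_eq_and_col_eq_of_low_entry hst htk (by omega) e hB hiB hjB
  have hca : e.col jB < e.col ja := e.col_strictMono (Fin.lt_def.2 (by omega))
  have h₀a := (hP.first_row i₀ ja hi₀).2 hja
  obtain ⟨i', j', hi', hj', hP'⟩ := WP_eq_true_left (e.apply_eq_true i₀ ja h₀a)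
    (hP.col_lt_of_first hst (by omega) e hi₀ h₀a)
  have hr₀ : 1 ≤ (e.row i₀ : ℕ) := by
    by_contra! h
    have := (hP.first_row i' j' (by omega)).1 hP'
    rw [Fin.lt_def] at hca
    omega
  have h₁ := Fin.val_add_sub_le_of_strictMono e.row_strictMono
    (show i₀ ≤ i from Fin.le_def.2 (by omega))
  have h₂ := Fin.val_add_sub_le_of_strictMono e.row_strictMono
    (show i ≤ iB from Fin.le_def.2 (by omega))
  omega

theorem sub_le_two (hP : OuterRows P a b s t) (hst : s ≤ t) (htk : t < k - 1) (hab : a < b)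
    (hbk : b < k) (e : Occurrence (WP P s t) P) {iB jB : Fin k} (hB : P iB jB = true)
    (hiB : (iB : ℕ) = k - 2) (hjB : (jB : ℕ) < a) : t - s ≤ 2 := by
  have hrow := hP.row_eq_succ hst htk hab hbk e hB hiB hjB
  obtain ⟨hrB, hcB⟩ := hP.row_eq_and_col_eq_of_low_entry hst htk (by omega) e hB hiB hjB
  obtain ⟨i₀, hi₀⟩ : ∃ i : Fin k, (i : ℕ) = 0 := ⟨⟨0, by omega⟩, rfl⟩
  obtain ⟨ja, hja⟩ : ∃ j : Fin k, (j : ℕ) = a := ⟨⟨a, by omega⟩, rfl⟩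
  obtain ⟨iL, hiL⟩ : ∃ i : Fin k, (i : ℕ) = k - 1 := ⟨⟨k - 1, by omega⟩, rfl⟩
  obtain ⟨jb, hjb⟩ : ∃ j : Fin k, (j : ℕ) = b := ⟨⟨b, by omega⟩, rfl⟩
  have h₀a := (hP.first_row i₀ ja hi₀).2 hja
  obtain ⟨i', j', hi', hj', hP'⟩ := WP_eq_true_left (e.apply_eq_true i₀ ja h₀a)
    (hP.col_lt_of_first hst (by omega) e hi₀ h₀a)
  have hr₀ := hrow i₀ (by omega)
  have hca : e.col jB < e.col ja := e.col_strictMono (Fin.lt_def.2 (by omega))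
  rw [Fin.lt_def] at hca
  have hcb : k - 1 ≤ (e.col jb : ℕ) := by
    by_contra! h
    obtain ⟨i'', -, hi'', -, -⟩ :=
      WP_eq_true_left (e.apply_eq_true iL jb ((hP.last_row iL jb hiL).2 hjb)) h
    have hBL : e.row iB < e.row iL := e.row_strictMono (Fin.lt_def.2 (by omega))
    rw [Fin.lt_def] at hBL
    omega
  have hgap := Fin.val_add_sub_le_of_strictMono e.col_strictMono
    (show jb ≤ j' from Fin.le_def.2 (by omega))
  obtain ⟨i'', -, hi'', -, -⟩ := WP_eq_true_right (e.apply_eq_true i' j' hP') (by omega)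
  have := hrow i' (by omega)
  omega

theorem avoids_WP_of_low_entry (hP : OuterRows P a b s t) (hst : s < t) (htk : t < k - 1)
    (hab : a < b) (hbk : b < k) {iB jB : Fin k} (hB : P iB jB = true)
    (hiB : (iB : ℕ) = k - 2) (hjB : (jB : ℕ) < a) : Avoids (WP P s t) P := by
  rintro ⟨r, c, hr, hc, h⟩
  let e : Occurrence (WP P s t) P := ⟨r, c, hr, hc, h⟩
  have hd := hP.sub_le_two hst.le htk hab hbk e hB hiB hjB
  have hrow := hP.row_eq_succ hst.le htk hab hbk e hB hiB hjB
  obtain ⟨iS, hiS⟩ : ∃ i : Fin k, (i : ℕ) = s := ⟨⟨s, by omega⟩, rfl⟩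
  obtain ⟨j₀, hj₀⟩ : ∃ j : Fin k, (j : ℕ) = 0 := ⟨⟨0, by omega⟩, rfl⟩
  have hrS := hrow iS (by omega)
  have hsS := hP.row_lt_of_left hst.le e iS hiS
  have hc₀ := Fin.val_add_le_of_strictMono e.col_strictMono j₀
  obtain ⟨i', j', hi', -, hP'⟩ :=
    WP_eq_true_left (e.apply_eq_true iS j₀ ((hP.left_row iS j₀ hiS).2 hj₀)) (by omega)
  exact hP.row_ne hst.le e hP' (by rw [hrow i' (by omega)]; omega)

end OuterRows

theorem stmt13 {k : ℕ} (P : Fin k → Fin k → Bool) (a b s t : ℕ)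
    (hs : 0 < s) (hst : s < t) (htk : t < k - 1)
    (hab : a < b) (hbk : b < k - 1)
    (hnt : NonTrivial P)
    (hrow0 : ∀ j : Fin k, (P ⟨0, by omega⟩ j = true ↔ j.val = a))
    (hrowlast : ∀ j : Fin k, (P ⟨k - 1, by omega⟩ j = true ↔ j.val = b))
    (hcol0 : ∀ i : Fin k, (P i ⟨0, by omega⟩ = true ↔ i.val = s))
    (hcollast : ∀ i : Fin k, (P i ⟨k - 1, by omega⟩ = true ↔ i.val = t))
    (hocc : ∃ iB iT jB jT : Fin k, P iB jB = true ∧ P iT jT = true ∧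
      iT < iB ∧ jB < jT ∧ iB.val = iT.val + (k - 2)) :
    Avoids (WP P s t) P := by
  have hP := OuterRows.of_nonTrivial (by omega) hnt hrow0 hrowlast hcol0 hcollast
  obtain ⟨iB, iT, jB, jT, hB, hT, hiTB, hjBT, hiB⟩ := hocc
  rw [Fin.lt_def] at hiTB hjBT
  rcases (show (iT : ℕ) = 0 ∨ (iT : ℕ) = 1 by omega) with hiT | hiT
  · have := (hP.first_row iT jT hiT).1 hT
    exact hP.avoids_WP_of_low_entry hst htk hab (by omega) hB (by omega) (by omega)
  · have := (hP.last_row iB jB (by omega)).1 hB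
    have hrot := (hP.rot180 (by omega) (by omega) (by omega) (by omega)).avoids_WP_of_low_entry
      (by omega) (by omega) (by omega) (by omega) (iB := iT.rev) (jB := jT.rev)
      (by simpa [rot180] using hT) (by rw [Fin.val_rev]; omega) (by rw [Fin.val_rev]; omega)
    exact fun hW => hrot ((contains_rot180_WP P hst.le (by omega)).trans hW.rot180)
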